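/- arXiv:math/0606574 — 2 statements merged into one kernel-verified Lean document; each statement's English description precedes it below -/
import Mathlib

section
/- Let H be a nontrivial group and G an infinite group. Then the restricted wreath product H ≀ G = (⊕_{g∈G} H) ⋊ G (with G acting by permuting the coordinates via left translation) is an ICC group, i.e., every nontrivial conjugacy class of H ≀ G is infinite. -/
/-- The subgroup of `G → H` of finitely supported functions (pointwise multiplication). -/
def baseSubgroup (G H : Type*) [Group H] : Subgroup (G → H) where
  carrier := {f | {x | f x ≠ 1}.Finite}
  one_mem' := by simp
  mul_mem' {a b} ha hb := by
    refine (ha.union hb).subset ?_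
    intro x hx
    by_contra h
    simp only [Set.mem_union, Set.mem_setOf_eq, not_or, not_not] at h
    simp [Set.mem_setOf_eq, Pi.mul_apply, h.1, h.2] at hx
  inv_mem' {a} ha := by
    refine ha.subset ?_
    intro x hx
    simp only [Set.mem_setOf_eq, Pi.inv_apply, ne_eq, inv_eq_one] at hx
    exact hx

/-- The shift automorphism of `G → H` given by left translation: `(g · f)(x) = f (g⁻¹ x)`. -/
def shiftAut (G H : Type*) [Group G] [Group H] (g : G) : MulAut (G → H) where
  toFun f := fun x => f (g⁻¹ * x)
  invFun f := fun x => f (g * x)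
  left_inv f := by ext x; simp [mul_assoc]
  right_inv f := by ext x; simp [mul_assoc]
  map_mul' f₁ f₂ := rfl

/-- The shift action of `G` on the restricted product `⊕_{g ∈ G} H`. -/
def restrictedShift (G H : Type*) [Group G] [Group H] :
    G →* MulAut (baseSubgroup G H) where
  toFun g :=
    { toFun := fun f => ⟨shiftAut G H g f.1, by
        refine (f.2.image (fun x => g * x)).subset ?_
        intro x hx
        exact ⟨g⁻¹ * x, hx, by group⟩⟩
      invFun := fun f => ⟨shiftAut G H g⁻¹ f.1, by
        refine (f.2.image (fun x => g⁻¹ * x)).subset ?_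
        intro x hx
        simp only [shiftAut, MulEquiv.coe_mk, Equiv.coe_fn_mk, Set.mem_setOf_eq, inv_inv] at hx
        exact ⟨g * x, hx, by group⟩⟩
      left_inv := fun f => by
        ext x
        simp [shiftAut, mul_assoc]
      right_inv := fun f => by
        ext x
        simp [shiftAut, mul_assoc]
      map_mul' := fun f₁ f₂ => rfl }
  map_one' := by
    ext f x
    simp [shiftAut]
  map_mul' g₁ g₂ := by
    ext f x
    simp [shiftAut, mul_assoc]

lemma image_infinite_of_finite_fibers {α β : Type*} {S : Set α} (hS : S.Infinite) {f : α → β}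
    (h : ∀ b, {a ∈ S | f a = b}.Finite) : (f '' S).Infinite := by
  intro hfin
  exact hS (((hfin.biUnion (fun b _ => h b)).subset
    (fun a ha => Set.mem_biUnion ⟨a, ha, rfl⟩ ⟨ha, rfl⟩)))

lemma restrictedShift_apply {G H : Type*} [Group G] [Group H] (g : G)
    (f : baseSubgroup G H) (z : G) :
    ((restrictedShift G H g f : baseSubgroup G H) : G → H) z = (f : G → H) (g⁻¹ * z) := rfl

/-- The restricted wreath product `H ≀ G` of a nontrivial group `H` by an infinite group `G`
is an ICC group: every nontrivial conjugacy class is infinite. -/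
theorem wreathProduct_icc (G H : Type*) [Group G] [Group H] [Infinite G]
    (hH : ∃ h : H, h ≠ 1)
    (x : baseSubgroup G H ⋊[restrictedShift G H] G) (hx : x ≠ 1) :
    {y | IsConj x y}.Infinite := by
  classical
  obtain ⟨h, hh⟩ := hH
  by_cases hg : x.right = 1
  · -- base case: x = (f, 1), f ≠ 1
    have hf : x.left ≠ 1 := by
      intro hl
      exact hx (SemidirectProduct.ext hl hg)
    obtain ⟨a, ha⟩ : ∃ a, ((x.left : G → H)) a ≠ 1 := by
      by_contra hc
      push_neg at hc
      exact hf (Subtype.ext (funext fun z => hc z))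
    set F : G → (baseSubgroup G H ⋊[restrictedShift G H] G) :=
      fun s => SemidirectProduct.inr s * x * (SemidirectProduct.inr s)⁻¹ with hF
    refine Set.Infinite.mono ?_ (image_infinite_of_finite_fibers
      (S := (Set.univ : Set G)) Set.infinite_univ (f := F) ?_)
    · rintro y ⟨s, -, rfl⟩
      exact isConj_iff.mpr ⟨SemidirectProduct.inr s, rfl⟩
    · intro y
      rcases Set.eq_empty_or_nonempty {a ∈ (Set.univ : Set G) | F a = y} with he | ⟨s, -, hs⟩
      · rw [he]; exact Set.finite_empty
      · refine Set.Finite.subset ((x.left.2.image (fun u => s * a * u⁻¹))) ?_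
        rintro s' ⟨-, hs'⟩
        have key : ((F s).left : G → H) = ((F s').left : G → H) := by
          rw [hs, hs']
        have hval : ∀ z, ((x.left : G → H)) (s⁻¹ * z) = ((x.left : G → H)) (s'⁻¹ * z) := by
          intro z
          have := congrFun key z
          simpa [hF, SemidirectProduct.mul_left, SemidirectProduct.inv_left,
            restrictedShift_apply, hg] using this
        have h2 := hval (s * a)
        rw [inv_mul_cancel_left] at h2
        refine ⟨s'⁻¹ * (s * a), ?_, ?_⟩
        · simpa using h2 ▸ ha
        · group
  · -- x.right = g ≠ 1
    set g := x.right with hgdef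
    set f : G → H := (x.left : G → H) with hfdef
    have hfin : {z | f z ≠ 1}.Finite := x.left.2
    set single : G → (G → H) := fun t => Pi.mulSingle t h with hsingle
    have hsame : ∀ t, single t t = h := by
      intro t; simp only [hsingle]; exact Pi.mulSingle_eq_same (M := fun _ => H) t h
    have hoff : ∀ t z, z ≠ t → single t z = 1 := by
      intro t z hzt; simp only [hsingle]; exact Pi.mulSingle_eq_of_ne (M := fun _ => H) hzt h
    have hmem : ∀ t, single t ∈ baseSubgroup G H := by
      intro t
      refine Set.Finite.subset (Set.finite_singleton t) ?_
      intro z hz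
      by_contra hzt
      simp only [Set.mem_singleton_iff] at hzt
      exact hz (hoff t z hzt)
    set b : G → baseSubgroup G H := fun t => ⟨single t, hmem t⟩ with hb
    set F : G → (baseSubgroup G H ⋊[restrictedShift G H] G) :=
      fun t => SemidirectProduct.inl (b t) * x * (SemidirectProduct.inl (b t))⁻¹ with hF
    have hleft : ∀ t z, ((F t).left : G → H) z =
        single t z * f z * (single t (g⁻¹ * z))⁻¹ := by
      intro t z
      simp [hF, SemidirectProduct.mul_left, SemidirectProduct.inv_left,
        restrictedShift_apply, hb]
      rfl
    have hS : ({t | f t = 1} : Set G).Infinite := by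
      have : ({t | f t = 1} : Set G) = {z | f z ≠ 1}ᶜ := by
        ext z; simp [Set.mem_compl_iff]
      rw [this]
      exact hfin.infinite_compl
    refine Set.Infinite.mono ?_ (image_infinite_of_finite_fibers hS (f := F) ?_)
    · rintro y ⟨t, -, rfl⟩
      exact isConj_iff.mpr ⟨SemidirectProduct.inl (b t), rfl⟩
    · intro y
      rcases Set.eq_empty_or_nonempty {a ∈ {t | f t = 1} | F a = y} with he | ⟨t, ht, hty⟩
      · exact he ▸ Set.finite_empty
      · refine Set.Finite.subset ((Set.finite_singleton (g * t)).insert t) ?_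
        rintro t' ⟨ht', hty'⟩
        have key := congrFun (Subtype.ext_iff.mp
          (congrArg SemidirectProduct.left (hty'.trans hty.symm))) t'
        rw [hleft, hleft] at key
        -- at z = t' : lhs = h * f t' * (mulSingle t' h (g⁻¹ t'))⁻¹ = h since f t' = 1, g⁻¹ t' ≠ t'
        have hne : g⁻¹ * t' ≠ t' := by
          intro hc
          apply hg
          have h1 : g⁻¹ = 1 := mul_right_cancel (hc.trans (one_mul t').symm)
          exact inv_eq_one.mp h1
        rw [hsame t', ht', hoff t' _ hne] at key
        simp only [mul_one, inv_one] at key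
        -- key : h = mulSingle t h t' * (mulSingle t h (g⁻¹ * t'))⁻¹
        by_cases h1 : t' = t
        · simp [h1]
        · by_cases h2 : g⁻¹ * t' = t
          · right
            simp only [Set.mem_singleton_iff]
            rw [← h2]; group
          · rw [hoff t t' h1, hoff t _ h2] at key
            simp at key
            exact absurd key hh
end

section
/- Let H₁, H₂ be Hilbert spaces, T the orthogonal projection of H₁ ⊗ H₂ onto K₁ ⊗ H₂ for a closed subspace K₁ ⊆ H₁, and E the orthogonal projection of H₁ ⊗ H₂ onto (ℂξ₀) ⊗ H₂ for a unit vector ξ₀ ∈ K₁. Suppose P₁ is the orthogonal projection of H₁ onto K₁ and there is a constant 0 ≤ c ≤ 1 with ‖P₁(η)‖² ≤ c‖η‖² + (1−c)|⟨η, ξ₀⟩|² for all η in a subspace V ⊆ H₁. Then for all ζ ∈ V ⊗ H₂: ‖T(ζ)‖² ≤ c‖ζ‖² + (1−c)‖E(ζ)‖². -/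
open scoped InnerProductSpace

section Aux

variable {H₁ H₂ W : Type*}
  [NormedAddCommGroup H₁] [InnerProductSpace ℂ H₁]
  [NormedAddCommGroup H₂] [InnerProductSpace ℂ H₂]
  [NormedAddCommGroup W] [InnerProductSpace ℂ W]

/-- Orthogonality to a set extends to the topological closure of its span. -/
lemma aux_orth_to_closure (r : W) (S : Set W) (h : ∀ s ∈ S, ⟪r, s⟫_ℂ = 0)
    {b : W} (hb : b ∈ (Submodule.span ℂ S).topologicalClosure) : ⟪r, b⟫_ℂ = 0 := by
  have hle : (Submodule.span ℂ S).topologicalClosure ≤ (innerSL ℂ r).ker := by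
    apply Submodule.topologicalClosure_minimal
    · rw [Submodule.span_le]
      intro s hs
      simpa using h s hs
    · exact ContinuousLinearMap.isClosed_ker _
  simpa using hle hb

/-- Characterization of the value of an idempotent self-adjoint operator. -/
lemma aux_proj_eq (P : W →L[ℂ] W) (hidem : ∀ a : W, P (P a) = P a)
    (hsa : ∀ a b : W, ⟪P a, b⟫_ℂ = ⟪a, P b⟫_ℂ)
    (ζ u : W) (hu : u ∈ LinearMap.range (P : W →ₗ[ℂ] W))
    (horth : ∀ b ∈ LinearMap.range (P : W →ₗ[ℂ] W), ⟪ζ - u, b⟫_ℂ = 0) : P ζ = u := by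
  obtain ⟨a, ha⟩ := hu
  have hPu : P u = u := by rw [← ha]; exact hidem a
  have h0 : ⟪P (ζ - u), P (ζ - u)⟫_ℂ = 0 := by
    rw [hsa, hidem]
    exact horth _ ⟨ζ - u, rfl⟩
  have h1 : P (ζ - u) = 0 := inner_self_eq_zero.mp h0
  have h2 : P ζ - u = 0 := by rw [← hPu, ← map_sub]; exact h1
  exact sub_eq_zero.mp h2

/-- Norm of a sum of simple tensors with orthonormal second factors. -/
lemma aux_norm_sum_tmul (tmul : H₁ →ₗ[ℂ] H₂ →ₗ[ℂ] W)
    (htmul : ∀ (x x' : H₁) (y y' : H₂),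
      ⟪tmul x y, tmul x' y'⟫_ℂ = ⟪x, x'⟫_ℂ * ⟪y, y'⟫_ℂ)
    {m : ℕ} (e : Fin m → H₂) (he : Orthonormal ℂ e) (η : Fin m → H₁) :
    ‖∑ k, tmul (η k) (e k)‖ ^ 2 = ∑ k, ‖η k‖ ^ 2 := by
  rw [orthonormal_iff_ite] at he
  have key : ⟪∑ k, tmul (η k) (e k), ∑ k, tmul (η k) (e k)⟫_ℂ = ∑ k, ⟪η k, η k⟫_ℂ := by
    rw [sum_inner]
    have : ∀ k, ⟪tmul (η k) (e k), ∑ l, tmul (η l) (e l)⟫_ℂ = ⟪η k, η k⟫_ℂ := by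
      intro k
      rw [inner_sum]
      have : ∀ l, ⟪tmul (η k) (e k), tmul (η l) (e l)⟫_ℂ
          = if k = l then ⟪η k, η l⟫_ℂ else 0 := by
        intro l
        rw [htmul, he k l]
        by_cases h : k = l <;> simp [h]
      simp only [this]
      simp
    simp only [this]
  have := congrArg Complex.re key
  simpa [← inner_self_eq_norm_sq (𝕜 := ℂ)] using this

end Aux

/-- Abstract form of the projection estimate on a Hilbert tensor product `H₁ ⊗ H₂`
(modelled by an inner product space `W` with a bilinear `tmul` multiplying inner products):
if `T` is the orthogonal projection onto `K₁ ⊗ H₂`, `E` the orthogonal projection onto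
`(ℂξ₀) ⊗ H₂` for a unit vector `ξ₀ ∈ K₁`, and the projection `P₁` onto `K₁` satisfies
`‖P₁ η‖² ≤ c ‖η‖² + (1−c) |⟨η, ξ₀⟩|²` on a subspace `V ⊆ H₁`, then
`‖T ζ‖² ≤ c ‖ζ‖² + (1−c) ‖E ζ‖²` for all `ζ` in the closure of `V ⊗ H₂`. -/
theorem tensor_projection_estimate
    {H₁ H₂ W : Type*}
    [NormedAddCommGroup H₁] [InnerProductSpace ℂ H₁]
    [NormedAddCommGroup H₂] [InnerProductSpace ℂ H₂]
    [NormedAddCommGroup W] [InnerProductSpace ℂ W]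
    (tmul : H₁ →ₗ[ℂ] H₂ →ₗ[ℂ] W)
    (htmul : ∀ (x x' : H₁) (y y' : H₂),
      ⟪tmul x y, tmul x' y'⟫_ℂ = ⟪x, x'⟫_ℂ * ⟪y, y'⟫_ℂ)
    (hdense : (Submodule.span ℂ {w : W | ∃ x y, w = tmul x y}).topologicalClosure = ⊤)
    (K₁ : Submodule ℂ H₁) [K₁.HasOrthogonalProjection]
    (ξ₀ : H₁) (hξ₀K : ξ₀ ∈ K₁) (hξ₀ : ‖ξ₀‖ = 1)
    (T : W →L[ℂ] W)
    (hT_idem : ∀ a : W, T (T a) = T a)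
    (hT_sa : ∀ a b : W, ⟪T a, b⟫_ℂ = ⟪a, T b⟫_ℂ)
    (hT_range : LinearMap.range (T : W →ₗ[ℂ] W) =
      (Submodule.span ℂ {w : W | ∃ k ∈ K₁, ∃ y, w = tmul k y}).topologicalClosure)
    (E : W →L[ℂ] W)
    (hE_idem : ∀ a : W, E (E a) = E a)
    (hE_sa : ∀ a b : W, ⟪E a, b⟫_ℂ = ⟪a, E b⟫_ℂ)
    (hE_range : LinearMap.range (E : W →ₗ[ℂ] W) =
      (Submodule.span ℂ {w : W | ∃ c : ℂ, ∃ y, w = tmul (c • ξ₀) y}).topologicalClosure)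
    (c : ℝ) (hc0 : 0 ≤ c) (hc1 : c ≤ 1)
    (V : Submodule ℂ H₁)
    (hP₁ : ∀ η ∈ V, ‖(K₁.orthogonalProjectionOnto η : H₁)‖ ^ 2
      ≤ c * ‖η‖ ^ 2 + (1 - c) * ‖⟪η, ξ₀⟫_ℂ‖ ^ 2)
    (ζ : W)
    (hζ : ζ ∈ (Submodule.span ℂ
      {w : W | ∃ v ∈ V, ∃ y, w = tmul v y}).topologicalClosure) :
    ‖T ζ‖ ^ 2 ≤ c * ‖ζ‖ ^ 2 + (1 - c) * ‖E ζ‖ ^ 2 := by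
  -- the two pointwise projection formulas
  have hTform : ∀ (x : H₁) (y : H₂),
      T (tmul x y) = tmul ((K₁.orthogonalProjectionOnto x : H₁)) y := by
    intro x y
    apply aux_proj_eq T hT_idem hT_sa
    · rw [hT_range]
      exact Submodule.le_topologicalClosure _
        (Submodule.subset_span ⟨_, (K₁.orthogonalProjectionOnto x).2, y, rfl⟩)
    · intro b hb
      rw [hT_range] at hb
      have hsub : tmul x y - tmul ((K₁.orthogonalProjectionOnto x : H₁)) y
          = tmul (x - (K₁.orthogonalProjectionOnto x : H₁)) y := by
        rw [map_sub, LinearMap.sub_apply]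
      rw [hsub]
      refine aux_orth_to_closure _ _ ?_ hb
      rintro s ⟨k, hk, y', rfl⟩
      rw [htmul]
      have h0 : ⟪x - (K₁.orthogonalProjectionOnto x : H₁), k⟫_ℂ = 0 :=
        (Submodule.mem_orthogonal' _ _).mp (K₁.starProjection_apply x ▸ K₁.sub_starProjection_mem_orthogonal x) k hk
      rw [h0, zero_mul]
  have hξ₀inner : ⟪ξ₀, ξ₀⟫_ℂ = 1 := by
    rw [inner_self_eq_norm_sq_to_K, hξ₀]
    norm_num
  have hEform : ∀ (x : H₁) (y : H₂),
      E (tmul x y) = tmul (⟪ξ₀, x⟫_ℂ • ξ₀) y := by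
    intro x y
    apply aux_proj_eq E hE_idem hE_sa
    · rw [hE_range]
      exact Submodule.le_topologicalClosure _
        (Submodule.subset_span ⟨⟪ξ₀, x⟫_ℂ, y, rfl⟩)
    · intro b hb
      rw [hE_range] at hb
      have hsub : tmul x y - tmul (⟪ξ₀, x⟫_ℂ • ξ₀) y
          = tmul (x - ⟪ξ₀, x⟫_ℂ • ξ₀) y := by
        rw [map_sub, LinearMap.sub_apply]
      rw [hsub]
      refine aux_orth_to_closure _ _ ?_ hb
      rintro s ⟨a, y', rfl⟩
      rw [htmul]
      have h0 : ⟪x - ⟪ξ₀, x⟫_ℂ • ξ₀, a • ξ₀⟫_ℂ = 0 := by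
        rw [inner_smul_right, inner_sub_left, inner_smul_left, hξ₀inner,
          inner_conj_symm]
        ring
      rw [h0, zero_mul]
  -- reduce to elements of the span
  set S : Set W := {w : W | ∃ v ∈ V, ∃ y, w = tmul v y} with hS
  suffices h : ∀ w ∈ Submodule.span ℂ S,
      ‖T w‖ ^ 2 ≤ c * ‖w‖ ^ 2 + (1 - c) * ‖E w‖ ^ 2 by
    have hcont : Continuous
        (fun w : W => c * ‖w‖ ^ 2 + (1 - c) * ‖E w‖ ^ 2 - ‖T w‖ ^ 2) := by
      fun_prop
    have hclosed : IsClosed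
        {w : W | 0 ≤ c * ‖w‖ ^ 2 + (1 - c) * ‖E w‖ ^ 2 - ‖T w‖ ^ 2} :=
      isClosed_le continuous_const hcont
    have hsubset : (Submodule.span ℂ S : Set W) ⊆
        {w : W | 0 ≤ c * ‖w‖ ^ 2 + (1 - c) * ‖E w‖ ^ 2 - ‖T w‖ ^ 2} := by
      intro w hw
      have := h w hw
      simp only [Set.mem_setOf_eq]
      linarith
    have hclos := closure_minimal hsubset hclosed
    have hζ' : ζ ∈ closure (Submodule.span ℂ S : Set W) := hζ
    have := hclos hζ'
    simp only [Set.mem_setOf_eq] at this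
    linarith
  intro w hw
  -- decompose w as a finite sum of simple tensors with first factors in V
  rw [Submodule.mem_span_set'] at hw
  obtain ⟨n, f, g, hsum⟩ := hw
  have hgS : ∀ i, ∃ v ∈ V, ∃ y, (g i : W) = tmul v y := fun i => (g i).2
  choose v hvV y hgy using hgS
  have hw' : w = ∑ i, tmul (f i • v i) (y i) := by
    rw [← hsum]
    refine Finset.sum_congr rfl fun i _ => ?_
    rw [hgy i, map_smul, LinearMap.smul_apply]
  set v' : Fin n → H₁ := fun i => f i • v i with hv'def
  have hv'V : ∀ i, v' i ∈ V := fun i => Submodule.smul_mem _ _ (hvV i)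
  -- orthonormal basis of the span of the y's
  set F : Submodule ℂ H₂ := Submodule.span ℂ (Set.range y) with hF
  haveI : FiniteDimensional ℂ F := FiniteDimensional.span_of_finite ℂ (Set.finite_range y)
  set m : ℕ := Module.finrank ℂ F with hm
  set b : OrthonormalBasis (Fin m) ℂ F := stdOrthonormalBasis ℂ F with hb
  set e : Fin m → H₂ := fun k => ((b k : F) : H₂) with he'
  have he : Orthonormal ℂ e := by
    rw [orthonormal_iff_ite]
    intro i j
    have hbo := b.orthonormal
    rw [orthonormal_iff_ite] at hbo
    simpa [he', ← Submodule.coe_inner] using hbo i j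
  have hyF : ∀ i, y i ∈ F := fun i => Submodule.subset_span (Set.mem_range_self i)
  have hyrep : ∀ i, y i = ∑ k, ⟪e k, y i⟫_ℂ • e k := by
    intro i
    have h1 := b.sum_repr ⟨y i, hyF i⟩
    have hcoef : ∀ k, b.repr ⟨y i, hyF i⟩ k = ⟪e k, y i⟫_ℂ := by
      intro k
      rw [b.repr_apply_apply, Submodule.coe_inner]
    conv_lhs => rw [show y i = ((⟨y i, hyF i⟩ : F) : H₂) from rfl, ← h1]
    push_cast
    exact Finset.sum_congr rfl fun k _ => by rw [hcoef k]
  -- rewrite w with orthonormal second factors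
  set η : Fin m → H₁ := fun k => ∑ i, ⟪e k, y i⟫_ℂ • v' i with hη
  have hηV : ∀ k, η k ∈ V :=
    fun k => Submodule.sum_mem _ (fun i _ => Submodule.smul_mem _ _ (hv'V i))
  have hw'' : w = ∑ k, tmul (η k) (e k) := by
    rw [hw']
    calc ∑ i, tmul (v' i) (y i)
        = ∑ i, ∑ k, ⟪e k, y i⟫_ℂ • tmul (v' i) (e k) := by
          refine Finset.sum_congr rfl fun i _ => ?_
          conv_lhs => rw [hyrep i]
          rw [map_sum]
          exact Finset.sum_congr rfl fun k _ => by rw [map_smul]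
      _ = ∑ k, ∑ i, ⟪e k, y i⟫_ℂ • tmul (v' i) (e k) := Finset.sum_comm
      _ = ∑ k, tmul (η k) (e k) := by
          refine Finset.sum_congr rfl fun k _ => ?_
          rw [hη]
          simp only [map_sum, LinearMap.sum_apply, map_smul, LinearMap.smul_apply]
  -- compute the three squared norms
  have hnw : ‖w‖ ^ 2 = ∑ k, ‖η k‖ ^ 2 := by
    rw [hw'']; exact aux_norm_sum_tmul tmul htmul e he η
  have hnT : ‖T w‖ ^ 2 = ∑ k, ‖(K₁.orthogonalProjectionOnto (η k) : H₁)‖ ^ 2 := by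
    have : T w = ∑ k, tmul ((K₁.orthogonalProjectionOnto (η k) : H₁)) (e k) := by
      rw [hw'', map_sum]
      exact Finset.sum_congr rfl fun k _ => hTform _ _
    rw [this]; exact aux_norm_sum_tmul tmul htmul e he _
  have hnE : ‖E w‖ ^ 2 = ∑ k, ‖⟪ξ₀, η k⟫_ℂ‖ ^ 2 := by
    have h1 : E w = ∑ k, tmul (⟪ξ₀, η k⟫_ℂ • ξ₀) (e k) := by
      rw [hw'', map_sum]
      exact Finset.sum_congr rfl fun k _ => hEform _ _
    rw [h1, aux_norm_sum_tmul tmul htmul e he _]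
    refine Finset.sum_congr rfl fun k _ => ?_
    rw [norm_smul, hξ₀, mul_one]
  rw [hnw, hnT, hnE, Finset.mul_sum, Finset.mul_sum, ← Finset.sum_add_distrib]
  refine Finset.sum_le_sum fun k _ => ?_
  have hk := hP₁ (η k) (hηV k)
  rw [norm_inner_symm] at hk
  linarith
end
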